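/- There is no (·,+)-affine embedding of [0,1] into ℝ: there is no continuous injective map s : [0,1] → ℝ satisfying s(max(λ·x, y)) = max(ln λ + s(x), s(y)) for all λ ∈ [0,1] and x, y ∈ [0,1] (with ln 0 = -∞ and -∞ + r = -∞). -/

import Mathlib

/-! Already the instance `x = 1`, `y = 0` of the affinity identity reads
`s λ = max (ln λ + s 1) (s 0)` for `λ ∈ (0,1]`, so every `λ > 0` with `ln λ ≤ s 0 - s 1`
has `s λ = s 0`; such a `λ` contradicts injectivity. -/

/-- The extended logarithm `[0,1] → [-∞,0] ⊆ EReal`, with `ln 0 = -∞`. -/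
noncomputable def elog (x : ℝ) : EReal :=
  if x = 0 then ⊥ else ((Real.log x : ℝ) : EReal)

open Set

def IsDotPlusAffineOnUnitInterval (s : ℝ → ℝ) : Prop :=
  ∀ lam ∈ Icc (0 : ℝ) 1, ∀ x ∈ Icc (0 : ℝ) 1, ∀ y ∈ Icc (0 : ℝ) 1,
    ((s (max (lam * x) y) : ℝ) : EReal) = max (elog lam + (s x : ℝ)) ((s y : ℝ) : EReal)

lemma elog_of_ne_zero {x : ℝ} (hx : x ≠ 0) : elog x = (Real.log x : EReal) := if_neg hx

namespace IsDotPlusAffineOnUnitInterval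

variable {s : ℝ → ℝ}

lemma apply_max_mul (hs : IsDotPlusAffineOnUnitInterval s) {lam x y : ℝ}
    (hlam : lam ∈ Ioc (0 : ℝ) 1) (hx : x ∈ Icc (0 : ℝ) 1) (hy : y ∈ Icc (0 : ℝ) 1) :
    s (max (lam * x) y) = max (Real.log lam + s x) (s y) := by
  have h := hs lam (Ioc_subset_Icc_self hlam) x hx y hy
  rw [elog_of_ne_zero hlam.1.ne', ← EReal.coe_add,
    ← Monotone.map_max EReal.coe_strictMono.monotone] at h
  exact EReal.coe_injective h

lemma apply_eq_apply_zero_of_log_le (hs : IsDotPlusAffineOnUnitInterval s) {lam : ℝ}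
    (hlam : lam ∈ Ioc (0 : ℝ) 1) (hlog : Real.log lam ≤ s 0 - s 1) : s lam = s 0 := by
  have h := hs.apply_max_mul hlam (right_mem_Icc.2 zero_le_one) (left_mem_Icc.2 zero_le_one)
  rwa [mul_one, max_eq_left hlam.1.le, max_eq_right (by linarith)] at h

lemma not_injOn (hs : IsDotPlusAffineOnUnitInterval s) : ¬ InjOn s (Icc (0 : ℝ) 1) := by
  intro hinj
  set lam := Real.exp (-|s 0 - s 1|)
  have hlam : lam ∈ Ioc (0 : ℝ) 1 :=
    ⟨Real.exp_pos _, Real.exp_le_one_iff.2 (neg_nonpos.2 (abs_nonneg _))⟩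
  have hlog : Real.log lam ≤ s 0 - s 1 := by
    rw [Real.log_exp]
    linarith [neg_abs_le (s 0 - s 1)]
  exact hlam.1.ne' (hinj (Ioc_subset_Icc_self hlam) (left_mem_Icc.2 zero_le_one)
    (hs.apply_eq_apply_zero_of_log_le hlam hlog))

end IsDotPlusAffineOnUnitInterval

/-- there is no (·,+)-affine embedding of `[0,1]` into `ℝ`, i.e.
no continuous injective map `s : [0,1] → ℝ` with
`s (max (λ·x) y) = max (ln λ + s x) (s y)` for all `λ, x, y ∈ [0,1]`
(conventions `ln 0 = -∞`, `-∞ + r = -∞`, `max (-∞) r = r`). -/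
theorem no_dotPlus_affine_embedding_unitInterval :
    ¬ ∃ s : ℝ → ℝ,
        ContinuousOn s (Set.Icc (0 : ℝ) 1) ∧
        Set.InjOn s (Set.Icc (0 : ℝ) 1) ∧
        ∀ lam ∈ Set.Icc (0 : ℝ) 1, ∀ x ∈ Set.Icc (0 : ℝ) 1,
          ∀ y ∈ Set.Icc (0 : ℝ) 1,
            ((s (max (lam * x) y) : ℝ) : EReal) =
              max (elog lam + (s x : ℝ)) ((s y : ℝ) : EReal) := by
  rintro ⟨s, -, hinj, hs⟩
  exact IsDotPlusAffineOnUnitInterval.not_injOn hs hinj
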